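/- Define g(m) = ½[Φ((mΔ − (n+m)μ)/√((n+m)(n+m+1))) + Φ((−mΔ − (n+m)μ)/√((n+m)(n+m+1)))] for real m ≥ 0. If Δ = 0 and μ > 0, then g is strictly decreasing in m. -/

import Mathlib

open MeasureTheory Real Filter
open scoped NNReal ENNReal
noncomputable def phi (x : ℝ) : ℝ := (Real.sqrt (2*Real.pi))⁻¹ * Real.exp (-x^2/2)
noncomputable def Phi (t : ℝ) : ℝ := ∫ x in Set.Iio t, phi x

/-! With `Δ = 0` both terms of `g` equal `Φ(-μ √((n+m)/(n+m+1)))`, and `(n+m)/(n+m+1)` increases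
with `m`, so the argument of the strictly increasing `Φ` strictly decreases. -/

lemma phi_pos (x : ℝ) : 0 < phi x := by
  unfold phi
  positivity

lemma integrable_phi : Integrable phi := by
  have h : phi = fun x => (√(2 * π))⁻¹ * exp (-(1 / 2) * x ^ 2) := by
    funext x
    unfold phi
    ring_nf
  rw [h]
  exact (integrable_exp_neg_mul_sq (by norm_num)).const_mul _

lemma setIntegral_phi_Ico_pos {a b : ℝ} (hab : a < b) : 0 < ∫ x in Set.Ico a b, phi x := by
  rw [setIntegral_pos_iff_support_of_nonneg_ae (.of_forall fun x => (phi_pos x).le)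
    integrable_phi.integrableOn]
  have hsupp : Function.support phi = Set.univ :=
    Set.eq_univ_of_forall fun x => (phi_pos x).ne'
  simp [hsupp, hab]

lemma Phi_strictMono : StrictMono Phi := by
  intro a b hab
  have hsplit : Phi b = Phi a + ∫ x in Set.Ico a b, phi x := by
    rw [Phi, Phi, ← Set.Iio_union_Ico_eq_Iio hab.le,
      setIntegral_union (Set.Iio_disjoint_Ici le_rfl |>.mono_right Set.Ico_subset_Ici_self)
        measurableSet_Ico integrable_phi.integrableOn integrable_phi.integrableOn]
  linarith [setIntegral_phi_Ico_pos hab]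

lemma div_sqrt_mul_add_one {t : ℝ} (ht : 0 ≤ t) : t / √(t * (t + 1)) = √(t / (t + 1)) := by
  rw [sqrt_div ht, sqrt_mul ht, div_mul_eq_div_div, div_sqrt]

lemma strictMonoOn_div_sqrt_mul_add_one :
    StrictMonoOn (fun t : ℝ => t / √(t * (t + 1))) (Set.Ici 0) := by
  intro s (hs : 0 ≤ s) t (ht : 0 ≤ t) hst
  simp only [div_sqrt_mul_add_one hs, div_sqrt_mul_add_one ht]
  apply sqrt_lt_sqrt (by positivity)
  rw [div_lt_div_iff₀ (by positivity) (by positivity)]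
  linarith

theorem stmt3 (μ Δ : ℝ) (hμ : 0 < μ) (hΔ : Δ = 0) (n : ℝ) (hn : 1 ≤ n) :
    StrictAntiOn (fun m : ℝ =>
      (1 / 2) * (Phi ((m * Δ - (n + m) * μ) / Real.sqrt ((n + m) * (n + m + 1)))
               + Phi ((-(m * Δ) - (n + m) * μ) / Real.sqrt ((n + m) * (n + m + 1)))))
      (Set.Ici 0) := by
  subst hΔ
  intro a (ha : 0 ≤ a) b (hb : 0 ≤ b) hab
  have hratio : (n + a) / √((n + a) * (n + a + 1)) < (n + b) / √((n + b) * (n + b + 1)) :=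
    strictMonoOn_div_sqrt_mul_add_one (show 0 ≤ n + a by linarith) (show 0 ≤ n + b by linarith)
      (by linarith)
  have hPhi := Phi_strictMono (neg_lt_neg (mul_lt_mul_of_pos_right hratio hμ))
  simp only [mul_zero, neg_zero, zero_sub, neg_div, mul_div_right_comm]
  linarith
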